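/- The map ρ ↦ ρ(g) is a bijection from the set of functions ρ : ℤ_n → ℂ∖{0} satisfying ρ(x)·ρ(y) = σ_s(x,y)·ρ(xy) for all x, y ∈ ℤ_n, onto the set {λ ∈ ℂ : λ^n = 𝕢^s}. In particular there are exactly n such functions ρ, and σ_s is a 2-coboundary on ℤ_n (i.e., there exists ρ : ℤ_n → ℂ∖{0} with σ_s(x,y) = ρ(x)·ρ(y)·ρ(xy)^{-1} for all x, y). -/

import Mathlib

/-- The 3-cocycle `Φ_s` on the cyclic group `ℤ_n` (written additively via `ZMod n`,
where `g^i` corresponds to `(i : ZMod n)`), defined by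
`Φ_s(g^i, g^j, g^k) = 𝕢^{s i (j+k-(j+k)')/n}` for `0 ≤ i,j,k ≤ n-1`,
where `i'` is the remainder of `i` modulo `n`. -/
noncomputable def PhiCocycle (n s : ℕ) (q : ℂ) (x y z : ZMod n) : ℂ :=
  q ^ (s * x.val * ((y.val + z.val - (y.val + z.val) % n) / n))

/-- The 2-cocycle `σ_s` on `ℤ_n` defined from `Φ_s` by
`σ_s(x,y) = Φ_s(x,y,g)·Φ_s(xy,y⁻¹,x⁻¹)·Φ_s(x,yg,y⁻¹) / (Φ_s(xyg,y⁻¹,x⁻¹)·Φ_s(x,y,y⁻¹))`,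
where the generator `g` corresponds to `(1 : ZMod n)`. -/
noncomputable def SigmaCocycle (n s : ℕ) (q : ℂ) (x y : ZMod n) : ℂ :=
  PhiCocycle n s q x y 1 * PhiCocycle n s q (x + y) (-y) (-x) *
      PhiCocycle n s q x (y + 1) (-y) /
    (PhiCocycle n s q (x + y + 1) (-y) (-x) * PhiCocycle n s q x y (-y))

/-!
Write `t = 𝕢^s` and let `c(a, b) ∈ {0, 1}` be the carry of adding representatives in
`{0, …, n-1}`, so that `Φ_s(x, y, z) = (t^x)^c(y, z)` and `n · c(a, b) = a + b - (a + b)'`.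
This identity gives `c(y, g) + c(yg, y⁻¹) = c(y, y⁻¹)`, which cancels three factors of `σ_s`;
the remaining two leave `σ_s(x, y) = t^{-c(y⁻¹, x⁻¹)}`. With `μ^n = t⁻¹` the same identity
exhibits this as the coboundary of `κ(x) = μ^{(x⁻¹)'}`. Finally, for any multiplier `σ` a solution
`ρ` is determined by `ρ(g)` (induction along powers of `g`), `ρ(g)^n = ∏ₓ σ(x, g)` (telescoping),
and `κ · χ` is a solution for every character `χ`, i.e. for every `χ(g)` with `χ(g)^n = 1`.
-/

open Finset

namespace ZMod

variable {n : ℕ}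

def carry (a b : ZMod n) : ℕ := (a.val + b.val) / n

variable [NeZero n]

theorem mul_carry_add_val (a b : ZMod n) : n * carry a b + (a + b).val = a.val + b.val := by
  rw [carry, val_add]
  exact Nat.div_add_mod _ _

theorem carry_add_carry_add_one_neg (y : ZMod n) :
    carry y 1 + carry (y + 1) (-y) = carry y (-y) := by
  have h₁ := mul_carry_add_val y 1
  have h₂ := mul_carry_add_val (y + 1) (-y)
  have h₃ := mul_carry_add_val y (-y)
  rw [show y + 1 + -y = 1 by abel] at h₂
  rw [add_neg_cancel, val_zero] at h₃
  exact Nat.eq_of_mul_eq_mul_left (NeZero.pos n) (by linarith)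

theorem pow_val_add {M : Type*} [Monoid M] {t : M} (ht : t ^ n = 1) (a b : ZMod n) :
    t ^ (a + b).val = t ^ a.val * t ^ b.val := by
  rw [val_add, ← pow_eq_pow_mod _ ht, pow_add]

theorem pow_val_neg {G : Type*} [DivisionMonoid G] {t : G} (ht : t ^ n = 1) (a : ZMod n) :
    t ^ (-a).val = (t ^ a.val)⁻¹ :=
  eq_inv_of_mul_eq_one_left <| by rw [← pow_val_add ht, neg_add_cancel, val_zero, pow_zero]

end ZMod

section ProjRep

variable {K : Type*} [Field K] {n : ℕ}

/-- `ρ` is a one-dimensional projective representation of `ZMod n` with multiplier `σ`. -/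
def IsProjRep (σ : ZMod n → ZMod n → K) (ρ : ZMod n → K) : Prop :=
  (∀ x, ρ x ≠ 0) ∧ ∀ x y, ρ x * ρ y = σ x y * ρ (x + y)

namespace IsProjRep

variable {σ : ZMod n → ZMod n → K} {ρ ρ' κ : ZMod n → K}

theorem multiplier_ne_zero (h : IsProjRep σ ρ) (x y : ZMod n) : σ x y ≠ 0 :=
  left_ne_zero_of_mul (h.2 x y ▸ mul_ne_zero (h.1 x) (h.1 y))

theorem apply_zero (h : IsProjRep σ ρ) : ρ 0 = σ 0 0 :=
  mul_right_cancel₀ (h.1 0) (by simpa using h.2 0 0)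

theorem eq_of_apply_one_eq [NeZero n] (hρ : IsProjRep σ ρ) (hρ' : IsProjRep σ ρ')
    (h₁ : ρ 1 = ρ' 1) : ρ = ρ' := by
  have hnat : ∀ k : ℕ, ρ k = ρ' k := by
    intro k
    induction k with
    | zero => simpa [hρ'.apply_zero] using hρ.apply_zero
    | succ k ih =>
      push_cast
      exact mul_left_cancel₀ (hρ.multiplier_ne_zero k 1) (by rw [← hρ.2, ← hρ'.2, ih, h₁])
  funext x
  rw [← ZMod.natCast_zmod_val x]
  exact hnat _

theorem apply_one_pow [NeZero n] (h : IsProjRep σ ρ) : ρ 1 ^ n = ∏ x, σ x 1 := by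
  have hprod : (∏ x, ρ x) * ρ 1 ^ n = (∏ x, ρ x) * ∏ x, σ x 1 :=
    calc (∏ x, ρ x) * ρ 1 ^ n = ∏ x, ρ x * ρ 1 := by
          rw [prod_mul_distrib, prod_const, card_univ, ZMod.card]
      _ = ∏ x, σ x 1 * ρ (Equiv.addRight 1 x) := by simp_rw [h.2]; rfl
      _ = (∏ x, ρ x) * ∏ x, σ x 1 := by rw [prod_mul_distrib, Equiv.prod_comp, mul_comm]
  exact mul_left_cancel₀ (prod_ne_zero_iff.2 fun x _ => h.1 x) hprod

theorem mul_pow_val [NeZero n] (h : IsProjRep σ ρ) {ζ : K} (hζ : ζ ^ n = 1) :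
    IsProjRep σ fun x => ρ x * ζ ^ x.val := by
  have hζ₀ : ζ ≠ 0 := ne_zero_pow (NeZero.ne n) (hζ ▸ one_ne_zero)
  refine ⟨fun x => mul_ne_zero (h.1 x) (pow_ne_zero _ hζ₀), fun x y => ?_⟩
  dsimp only
  rw [ZMod.pow_val_add hζ, mul_mul_mul_comm, h.2, mul_assoc]

theorem bijOn_apply_one [Fact (1 < n)] (hκ : IsProjRep σ κ) :
    Set.BijOn (fun ρ => ρ 1) {ρ | IsProjRep σ ρ} {l | l ^ n = κ 1 ^ n} := by
  refine ⟨fun ρ hρ => ?_, fun ρ hρ ρ' hρ' h₁ => hρ.eq_of_apply_one_eq hρ' h₁, fun l hl => ?_⟩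
  · exact (apply_one_pow hρ).trans hκ.apply_one_pow.symm
  · have hζ : (l / κ 1) ^ n = 1 := by
      rw [div_pow, hl, div_self (pow_ne_zero _ (hκ.1 1))]
    refine ⟨_, hκ.mul_pow_val hζ, ?_⟩
    simp only [ZMod.val_one, pow_one]
    exact mul_div_cancel₀ l (hκ.1 1)

end IsProjRep

end ProjRep

section SigmaCocycle

variable {n s : ℕ} {q : ℂ}

theorem phiCocycle_eq_pow_carry (x y z : ZMod n) :
    PhiCocycle n s q x y z = ((q ^ s) ^ x.val) ^ ZMod.carry y z := by
  rw [PhiCocycle, ZMod.carry, ← Nat.div_eq_sub_mod_div, mul_assoc, pow_mul, pow_mul]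

variable [Fact (1 < n)]

theorem sigmaCocycle_eq_inv_pow_carry (hq : q ^ n = 1) (x y : ZMod n) :
    SigmaCocycle n s q x y = (q ^ s)⁻¹ ^ ZMod.carry (-y) (-x) := by
  have ht : (q ^ s) ^ n = 1 := by rw [pow_right_comm, hq, one_pow]
  have ht₀ : q ^ s ≠ 0 := ne_zero_pow (NeZero.ne n) (ht ▸ one_ne_zero)
  simp only [SigmaCocycle, phiCocycle_eq_pow_carry]
  generalize q ^ s = t at ht ht₀
  rw [ZMod.pow_val_add ht (x + y) 1, ZMod.val_one, pow_one, mul_pow, inv_pow,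
    ← ZMod.carry_add_carry_add_one_neg y, pow_add]
  field_simp

theorem isProjRep_sigmaCocycle (hq : q ^ n = 1) {μ : ℂ} (hμ : μ ^ n = (q ^ s)⁻¹) :
    IsProjRep (SigmaCocycle n s q) fun x => μ ^ (-x).val := by
  have hq₀ : q ≠ 0 := ne_zero_pow (NeZero.ne n) (hq ▸ one_ne_zero)
  have hμ₀ : μ ≠ 0 := ne_zero_pow (NeZero.ne n) (hμ ▸ inv_ne_zero (pow_ne_zero s hq₀))
  refine ⟨fun x => pow_ne_zero _ hμ₀, fun x y => ?_⟩
  dsimp only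
  rw [sigmaCocycle_eq_inv_pow_carry hq, ← hμ, ← pow_mul, ← pow_add, ← pow_add, neg_add_rev,
    ZMod.mul_carry_add_val, add_comm]

end SigmaCocycle

theorem ncard_setOf_pow_eq {R : Type*} [CommRing R] [IsDomain R] {n : ℕ} {ζ : R}
    (hζ : IsPrimitiveRoot ζ n) (hn : 0 < n) {a : R} (ha : a ≠ 0) (hroot : ∃ α, α ^ n = a) :
    {x : R | x ^ n = a}.ncard = n := by
  classical
  have hset : {x : R | x ^ n = a} = ↑(Polynomial.nthRootsFinset n a) := by
    ext x
    simp [Polynomial.mem_nthRootsFinset hn]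
  rw [hset, Set.ncard_coe_finset, Polynomial.nthRootsFinset_def,
    Multiset.toFinset_card_of_nodup (hζ.nthRoots_nodup ha), hζ.card_nthRoots, if_pos hroot]

theorem one_dim_projective_reps_bijection_general
    (n : ℕ) (hn : 2 ≤ n) (q : ℂ) (hq : IsPrimitiveRoot q n)
    (s : ℕ) :
    Set.BijOn (fun ρ : ZMod n → ℂ => ρ 1)
      {ρ | (∀ x, ρ x ≠ 0) ∧
        ∀ x y : ZMod n, ρ x * ρ y = SigmaCocycle n s q x y * ρ (x + y)}
      {l : ℂ | l ^ n = q ^ s} ∧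
    {ρ : ZMod n → ℂ | (∀ x, ρ x ≠ 0) ∧
        ∀ x y : ZMod n, ρ x * ρ y = SigmaCocycle n s q x y * ρ (x + y)}.ncard = n ∧
    ∃ ρ : ZMod n → ℂ, (∀ x, ρ x ≠ 0) ∧
      ∀ x y : ZMod n, SigmaCocycle n s q x y = ρ x * ρ y * (ρ (x + y))⁻¹ := by
  have : Fact (1 < n) := ⟨hn⟩
  have hn₀ : 0 < n := by omega
  obtain ⟨μ, hμ⟩ := IsAlgClosed.exists_pow_nat_eq (q ^ s)⁻¹ hn₀
  have hκ := isProjRep_sigmaCocycle hq.pow_eq_one hμ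
  have hκ₁ : (μ ^ (-1 : ZMod n).val) ^ n = q ^ s := by
    have ht : (q ^ s)⁻¹ ^ n = 1 := by rw [inv_pow, pow_right_comm, hq.pow_eq_one, one_pow, inv_one]
    rw [← pow_mul, mul_comm, pow_mul, hμ, ZMod.pow_val_neg ht, ZMod.val_one, pow_one, inv_inv]
  have hbij := hκ.bijOn_apply_one
  rw [hκ₁] at hbij
  refine ⟨hbij, hbij.injOn.ncard_image.symm.trans ?_, _, hκ.1,
    fun x y => (eq_mul_inv_iff_mul_eq₀ (hκ.1 _)).2 (hκ.2 x y).symm⟩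
  rw [hbij.image_eq]
  exact ncard_setOf_pow_eq hq hn₀ (pow_ne_zero s (hq.ne_zero hn₀.ne'))
    (IsAlgClosed.exists_pow_nat_eq _ hn₀)

/-- The map `ρ ↦ ρ(g)` is a bijection from the set of one-dimensional projective
`σ_s`-representations `ρ : ℤ_n → ℂ∖{0}` onto `{λ ∈ ℂ : λ^n = 𝕢^s}`; in particular
there are exactly `n` such `ρ`, and `σ_s` is a 2-coboundary on `ℤ_n`. -/
theorem one_dim_projective_reps_bijection
    (n : ℕ) (hn : 2 ≤ n) (q : ℂ) (hq : IsPrimitiveRoot q n)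
    (s : ℕ) (hs : s ≤ n - 1) :
    Set.BijOn (fun ρ : ZMod n → ℂ => ρ 1)
      {ρ | (∀ x, ρ x ≠ 0) ∧
        ∀ x y : ZMod n, ρ x * ρ y = SigmaCocycle n s q x y * ρ (x + y)}
      {l : ℂ | l ^ n = q ^ s} ∧
    {ρ : ZMod n → ℂ | (∀ x, ρ x ≠ 0) ∧
        ∀ x y : ZMod n, ρ x * ρ y = SigmaCocycle n s q x y * ρ (x + y)}.ncard = n ∧
    ∃ ρ : ZMod n → ℂ, (∀ x, ρ x ≠ 0) ∧
      ∀ x y : ZMod n, SigmaCocycle n s q x y = ρ x * ρ y * (ρ (x + y))⁻¹ :=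
  one_dim_projective_reps_bijection_general n hn q hq s
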